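/- Let u : [0, t₀) → (0,∞) be differentiable with u(0) = 1 and suppose (d/dt) u(t)^p ≥ -a K u(t) where p = (n+2)/(n-2), a = (n-2)/(4(n-1)), K ≥ 0, n ≥ 3. Then u(t) ≥ (1 - ((n-2)/((n-1)(n+2))) K t)^{(n-2)/4} for all t ∈ [0, t₀) with ((n-2)/((n-1)(n+2))) K t < 1. -/

import Mathlib

/-!
With `p = (n+2)/(n-2)` the inequality `(u^p)' ≥ -a K u` says that `u^(p-1) = (u^p)^((p-1)/p)`
has derivative `((p-1)/p) (u^p)' / u ≥ -((p-1)/p) a K = -c K`, where `c = (n-2)/((n-1)(n+2))`.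
Hence `u^(p-1)` decreases at most linearly, `u(t)^(4/(n-2)) ≥ 1 - c K t`, and taking the
`(n-2)/4`-th power gives the barrier.
-/

open Set

theorem hasDerivAt_rpow_rpow_sub_one_div {u : ℝ → ℝ} {p d x : ℝ} (hp : p ≠ 0)
    (hu : 0 < u x) (h : HasDerivAt (fun s => u s ^ p) d x) :
    HasDerivAt (fun s => (u s ^ p) ^ ((p - 1) / p)) ((p - 1) / p * d / u x) x := by
  convert h.rpow_const (p := (p - 1) / p) (Or.inl (Real.rpow_pos_of_pos hu p).ne') using 1
  have hexp : p * ((p - 1) / p - 1) = -1 := by field_simp; ring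
  rw [← Real.rpow_mul hu.le, hexp, Real.rpow_neg_one]
  ring

theorem rpow_sub_one_sub_mul_le_of_hasDerivAt_rpow {u D : ℝ → ℝ} {p b t₀ : ℝ} (hp : 1 < p)
    (hpos : ∀ t ∈ Ico 0 t₀, 0 < u t)
    (hderiv : ∀ t ∈ Ico 0 t₀, HasDerivAt (fun s => u s ^ p) (D t) t)
    (hineq : ∀ t ∈ Ico 0 t₀, -(b * u t) ≤ D t) :
    ∀ t ∈ Ico 0 t₀, u 0 ^ (p - 1) - (p - 1) / p * b * t ≤ u t ^ (p - 1) := by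
  have hp0 : p ≠ 0 := by positivity
  have hr : 0 ≤ (p - 1) / p := div_nonneg (by linarith) (by linarith)
  set g : ℝ → ℝ := fun s => (u s ^ p) ^ ((p - 1) / p)
  have hg : ∀ t ∈ Ico 0 t₀, HasDerivAt g ((p - 1) / p * D t / u t) t := fun t ht =>
    hasDerivAt_rpow_rpow_sub_one_div hp0 (hpos t ht) (hderiv t ht)
  have hg_eq : ∀ t ∈ Ico 0 t₀, g t = u t ^ (p - 1) := fun t ht => by
    show (u t ^ p) ^ _ = _
    rw [← Real.rpow_mul (hpos t ht).le, mul_div_cancel₀ _ hp0]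
  have hslope : ∀ t ∈ interior (Ico 0 t₀), -((p - 1) / p * b) ≤ deriv g t := by
    intro t ht
    have ht' : t ∈ Ico 0 t₀ := interior_subset ht
    rw [(hg t ht').deriv, le_div_iff₀ (hpos t ht')]
    nlinarith [mul_le_mul_of_nonneg_left (hineq t ht') hr]
  intro t ht
  have h0 : (0 : ℝ) ∈ Ico 0 t₀ := ⟨le_rfl, ht.1.trans_lt ht.2⟩
  have hmvt := (convex_Ico 0 t₀).mul_sub_le_image_sub_of_le_deriv
    (fun s hs => (hg s hs).continuousAt.continuousWithinAt)
    (fun s hs => (hg s (interior_subset hs)).differentiableAt.differentiableWithinAt)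
    hslope 0 h0 t ht ht.1
  rw [hg_eq t ht, hg_eq 0 h0] at hmvt
  linarith

theorem stmt_6_general (n : ℕ) (hn : 3 ≤ n) (K t₀ : ℝ)
    (u D : ℝ → ℝ)
    (hpos : ∀ t ∈ Set.Ico (0:ℝ) t₀, 0 < u t)
    (hu0 : u 0 = 1)
    (hderiv : ∀ t ∈ Set.Ico (0:ℝ) t₀,
      HasDerivAt (fun s => u s ^ (((n:ℝ) + 2) / ((n:ℝ) - 2))) (D t) t)
    (hineq : ∀ t ∈ Set.Ico (0:ℝ) t₀,
      -((((n:ℝ) - 2) / (4 * ((n:ℝ) - 1))) * K * u t) ≤ D t) :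
    ∀ t ∈ Set.Ico (0:ℝ) t₀,
      (((n:ℝ) - 2) / (((n:ℝ) - 1) * ((n:ℝ) + 2))) * K * t < 1 →
      (1 - (((n:ℝ) - 2) / (((n:ℝ) - 1) * ((n:ℝ) + 2))) * K * t) ^ (((n:ℝ) - 2) / 4) ≤ u t := by
  intro t ht hlt
  have hn2 : (0 : ℝ) < n - 2 := by
    have : (3 : ℝ) ≤ n := by exact_mod_cast hn
    linarith
  have hp : 1 < ((n : ℝ) + 2) / (n - 2) := by rw [one_lt_div hn2]; linarith
  have hp_sub_one : ((n : ℝ) + 2) / (n - 2) - 1 = (((n : ℝ) - 2) / 4)⁻¹ := by field_simp; ring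
  have hslope : (((n : ℝ) + 2) / (n - 2) - 1) / ((n + 2) / (n - 2))
      * ((n - 2) / (4 * (n - 1)) * K) = (n - 2) / ((n - 1) * (n + 2)) * K := by
    field_simp
    ring
  have hbarrier := rpow_sub_one_sub_mul_le_of_hasDerivAt_rpow hp hpos hderiv hineq t ht
  rw [hu0, Real.one_rpow, hslope, hp_sub_one] at hbarrier
  exact (Real.le_rpow_inv_iff_of_pos (sub_nonneg.2 hlt.le) (hpos t ht).le
    (div_pos hn2 four_pos)).1 hbarrier

/-- Lower barrier for the Yamabe flow conformal factor: if `u(0)=1`, `u>0` and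
`d/dt(u^p) ≥ -a·K·u`, then `u(t) ≥ (1 - ((n-2)/((n-1)(n+2))) K t)^{(n-2)/4}`
as long as the base is positive. -/
theorem stmt_6 (n : ℕ) (hn : 3 ≤ n) (K t₀ : ℝ) (hK : 0 ≤ K) (ht₀ : 0 < t₀)
    (u D : ℝ → ℝ)
    (hpos : ∀ t ∈ Set.Ico (0:ℝ) t₀, 0 < u t)
    (hu0 : u 0 = 1)
    (hderiv : ∀ t ∈ Set.Ico (0:ℝ) t₀,
      HasDerivAt (fun s => u s ^ (((n:ℝ) + 2) / ((n:ℝ) - 2))) (D t) t)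
    (hineq : ∀ t ∈ Set.Ico (0:ℝ) t₀,
      -((((n:ℝ) - 2) / (4 * ((n:ℝ) - 1))) * K * u t) ≤ D t) :
    ∀ t ∈ Set.Ico (0:ℝ) t₀,
      (((n:ℝ) - 2) / (((n:ℝ) - 1) * ((n:ℝ) + 2))) * K * t < 1 →
      (1 - (((n:ℝ) - 2) / (((n:ℝ) - 1) * ((n:ℝ) + 2))) * K * t) ^ (((n:ℝ) - 2) / 4) ≤ u t :=
  stmt_6_general n hn K t₀ u D hpos hu0 hderiv hineq
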